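/- Let C be a right Hopf-Galois co-object over a Hopf algebra H with cotranslation map τ = (ε⊗id)∘can⁻¹. Then for all a,b ∈ C and h ∈ H: ε(τ(a⊗b)) = ε(a)ε(b); Σ τ(a₁⊗a₂) = ε(a)1_H; τ(a ⊗ b·h) = τ(a⊗b)h; and Σ a₁·τ(a₂⊗b) = ε(a)b. -/

import Mathlib

open Coalgebra TensorProduct

universe u v w

/-- The canonical map `C ⊗ H → C ⊗ C`, `c ⊗ h ↦ Σ c₁ ⊗ c₂·h`, for a right action
`act` of `H` on `C`. -/
noncomputable def canMap {F : Type u} {C : Type v} {H : Type w} [Field F]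
    [AddCommGroup C] [Module F C] [Coalgebra F C] [AddCommGroup H] [Module F H]
    (act : C →ₗ[F] H →ₗ[F] C) : C ⊗[F] H →ₗ[F] C ⊗[F] C :=
  (LinearMap.lTensor C (TensorProduct.lift act)) ∘ₗ
    (TensorProduct.assoc F C C H).toLinearMap ∘ₗ
    (LinearMap.rTensor H (comul (R := F)))

/-- The cotranslation map `τ = (ε ⊗ id) ∘ can⁻¹ : C ⊗ C → H`, where `inv` is the
inverse of the canonical map. -/
noncomputable def cotr {F : Type u} {C : Type v} {H : Type w} [Field F]
    [AddCommGroup C] [Module F C] [Coalgebra F C] [AddCommGroup H] [Module F H]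
    (inv : C ⊗[F] C →ₗ[F] C ⊗[F] H) : C ⊗[F] C →ₗ[F] H :=
  (TensorProduct.lid F H).toLinearMap ∘ₗ (LinearMap.rTensor H (counit (R := F))) ∘ₗ inv

/-! Everything follows from `τ ∘ can = ε ⊗ id`, which holds because `can⁻¹ ∘ can = id`. As `can`
is surjective, two linear maps out of `C ⊗ C` agree as soon as they agree on the elements
`can (c ⊗ h) = Σ c₁ ⊗ c₂·h`. For the last identity, coassociativity turns `Σ a₁·τ(a₂ ⊗ b)` at
`a ⊗ b = can (c ⊗ h)` into `Σ c₁·τ(can (c₂ ⊗ h)) = Σ c₁·ε(c₂)h = c·h`; applying `ε` to the last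
identity gives the first one. -/

section

variable {F : Type u} {C : Type v} {H : Type w} [Field F]
  [AddCommGroup C] [Module F C] [Coalgebra F C] [AddCommGroup H] [Module F H]
  {act : C →ₗ[F] H →ₗ[F] C} {inv : C ⊗[F] C →ₗ[F] C ⊗[F] H}

theorem canMap_tmul (c : C) (h : H) :
    canMap act (c ⊗ₜ h) = (act.flip h).lTensor C (comul c) := by
  simp only [canMap, LinearMap.comp_apply, LinearMap.rTensor_tmul, LinearEquiv.coe_coe]
  induction comul (R := F) c using TensorProduct.induction_on with
  | zero => simp
  | tmul x y => simp
  | add x y hx hy => simp only [add_tmul, map_add, hx, hy]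

theorem cotr_canMap_tmul (hinv : inv ∘ₗ canMap act = LinearMap.id) (c : C) (h : H) :
    cotr inv (canMap act (c ⊗ₜ h)) = counit (R := F) c • h := by
  simp [cotr, ← LinearMap.comp_apply inv, hinv]

theorem ext_of_surjective_canMap {X : Type*} [AddCommGroup X] [Module F X]
    (hsurj : Function.Surjective (canMap act)) {f g : C ⊗[F] C →ₗ[F] X}
    (hfg : ∀ c h, f (canMap act (c ⊗ₜ h)) = g (canMap act (c ⊗ₜ h))) : f = g :=
  (LinearMap.cancel_right hsurj).1 (TensorProduct.ext' hfg)

/-- `a ⊗ b ↦ Σ a₁·τ(a₂ ⊗ b)`. -/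
noncomputable def actCotr (act : C →ₗ[F] H →ₗ[F] C) (inv : C ⊗[F] C →ₗ[F] C ⊗[F] H) :
    C ⊗[F] C →ₗ[F] C :=
  lift act ∘ₗ (cotr inv).lTensor C ∘ₗ TensorProduct.assoc F C C C ∘ₗ comul.rTensor C

theorem actCotr_tmul (a b : C) {ι : Type*} (ra : Coalgebra.Repr F a ι) :
    actCotr act inv (a ⊗ₜ b) = ∑ i ∈ ra.index, act (ra.left i) (cotr inv (ra.right i ⊗ₜ b)) := by
  simp only [actCotr, LinearMap.comp_apply, LinearMap.rTensor_tmul, LinearEquiv.coe_coe,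
    ← ra.eq, sum_tmul, map_sum, TensorProduct.assoc_tmul, LinearMap.lTensor_tmul, lift.tmul]

theorem actCotr_comp_lTensor (g : C →ₗ[F] C) :
    actCotr act inv ∘ₗ g.lTensor C =
      lift act ∘ₗ (cotr inv ∘ₗ g.lTensor C).lTensor C ∘ₗ TensorProduct.assoc F C C C ∘ₗ
        comul.rTensor C := by
  refine TensorProduct.ext' fun a b => ?_
  simp only [actCotr, LinearMap.comp_apply, LinearMap.lTensor_tmul, LinearMap.rTensor_tmul]
  induction comul (R := F) a using TensorProduct.induction_on with
  | zero => simp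
  | tmul x y => simp
  | add x y hx hy => simp only [add_tmul, map_add, hx, hy]

theorem actCotr_canMap_tmul (hinv : inv ∘ₗ canMap act = LinearMap.id) (c : C) (h : H) :
    actCotr act inv (canMap act (c ⊗ₜ h)) = act c h := by
  have hcotr :
      (cotr inv ∘ₗ (act.flip h).lTensor C) ∘ₗ comul = (counit (R := F)).smulRight h := by
    ext x
    simp [← canMap_tmul, cotr_canMap_tmul hinv]
  have hlift : lift act ∘ₗ ((counit (R := F) : C →ₗ[F] F).smulRight h).lTensor C =
      act.flip h ∘ₗ (TensorProduct.rid F C).toLinearMap ∘ₗ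
        (counit (R := F) : C →ₗ[F] F).lTensor C :=
    TensorProduct.ext' fun x y => by simp
  rw [canMap_tmul, ← LinearMap.comp_apply (actCotr act inv), actCotr_comp_lTensor]
  simp only [LinearMap.comp_apply, LinearEquiv.coe_coe, coassoc_apply,
    ← LinearMap.lTensor_comp_apply, hcotr, ← LinearMap.comp_apply (lift act), hlift]
  simp

theorem actCotr_eq (hsurj : Function.Surjective (canMap act))
    (hinv : inv ∘ₗ canMap act = LinearMap.id) :
    actCotr act inv = (TensorProduct.lid F C).toLinearMap ∘ₗ (counit (R := F)).rTensor C := by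
  refine ext_of_surjective_canMap hsurj fun c h => ?_
  rw [actCotr_canMap_tmul hinv, canMap_tmul, LinearMap.comp_apply,
    ← LinearMap.comp_apply ((counit (R := F) : C →ₗ[F] F).rTensor C),
    LinearMap.rTensor_comp_lTensor, ← LinearMap.lTensor_comp_rTensor, LinearMap.comp_apply,
    rTensor_counit_comul, LinearMap.lTensor_tmul, LinearEquiv.coe_coe, TensorProduct.lid_tmul,
    one_smul, LinearMap.flip_apply]

theorem sum_act_cotr (hsurj : Function.Surjective (canMap act))
    (hinv : inv ∘ₗ canMap act = LinearMap.id) (a b : C) {ι : Type*} (ra : Coalgebra.Repr F a ι) :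
    ∑ i ∈ ra.index, act (ra.left i) (cotr inv (ra.right i ⊗ₜ b)) = counit (R := F) a • b := by
  rw [← actCotr_tmul, actCotr_eq hsurj hinv]
  simp

theorem counit_cotr [Coalgebra F H] (hsurj : Function.Surjective (canMap act))
    (hinv : inv ∘ₗ canMap act = LinearMap.id)
    (hcounit : ∀ c h, counit (R := F) (act c h) = counit (R := F) c * counit (R := F) h)
    (a b : C) : counit (R := F) (cotr inv (a ⊗ₜ b)) = counit (R := F) a * counit (R := F) b := by
  calc counit (R := F) (cotr inv (a ⊗ₜ b))
      = counit (R := F) (cotr inv ((∑ i ∈ (ℛ F a).index,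
          counit (R := F) ((ℛ F a).left i) • (ℛ F a).right i) ⊗ₜ b)) := by
        rw [sum_counit_smul]
    _ = ∑ i ∈ (ℛ F a).index,
          counit (R := F) (act ((ℛ F a).left i) (cotr inv ((ℛ F a).right i ⊗ₜ b))) := by
        simp [sum_tmul, ← smul_tmul', hcounit]
    _ = counit (R := F) a * counit (R := F) b := by
        rw [← map_sum, sum_act_cotr hsurj hinv, map_smul, smul_eq_mul]

end

section

variable {F : Type u} {C : Type v} {H : Type w} [Field F]
  [AddCommGroup C] [Module F C] [Coalgebra F C] [Ring H] [Algebra F H]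
  {act : C →ₗ[F] H →ₗ[F] C} {inv : C ⊗[F] C →ₗ[F] C ⊗[F] H}

theorem sum_cotr_comul (hinv : inv ∘ₗ canMap act = LinearMap.id) (hone : ∀ c, act c 1 = c)
    (a : C) {ι : Type*} (ra : Coalgebra.Repr F a ι) :
    ∑ i ∈ ra.index, cotr inv (ra.left i ⊗ₜ ra.right i) = counit (R := F) a • (1 : H) := by
  have hflip : act.flip 1 = LinearMap.id := LinearMap.ext hone
  rw [← map_sum, ra.eq, ← cotr_canMap_tmul hinv, canMap_tmul, hflip, LinearMap.lTensor_id,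
    LinearMap.id_apply]

theorem cotr_tmul_act (hsurj : Function.Surjective (canMap act))
    (hinv : inv ∘ₗ canMap act = LinearMap.id) (hmul : ∀ c h k, act (act c h) k = act c (h * k))
    (a b : C) (h : H) : cotr inv (a ⊗ₜ act b h) = cotr inv (a ⊗ₜ b) * h := by
  have hflip : ∀ k, act.flip h ∘ₗ act.flip k = act.flip (k * h) :=
    fun k => LinearMap.ext fun c => hmul c k h
  have hcomm : cotr inv ∘ₗ (act.flip h).lTensor C = LinearMap.mulRight F h ∘ₗ cotr inv := by
    refine ext_of_surjective_canMap hsurj fun c k => ?_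
    simp only [LinearMap.comp_apply, canMap_tmul, ← LinearMap.lTensor_comp_apply, hflip]
    simp only [← canMap_tmul, cotr_canMap_tmul hinv, LinearMap.mulRight_apply, smul_mul_assoc]
  exact LinearMap.congr_fun hcomm (a ⊗ₜ b)

end

theorem cotr_props_general {F : Type u} {C : Type v} {H : Type w} [Field F]
    [AddCommGroup C] [Module F C] [Coalgebra F C] [Ring H] [HopfAlgebra F H]
    (act : C →ₗ[F] H →ₗ[F] C)
    (hact_one : ∀ c : C, act c 1 = c)
    (hact_mul : ∀ (c : C) (h k : H), act (act c h) k = act c (h * k))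
    (hact_counit : ∀ (c : C) (h : H),
      counit (R := F) (act c h) = counit (R := F) c * counit (R := F) h)
    (inv : C ⊗[F] C →ₗ[F] C ⊗[F] H)
    (hinv₁ : canMap act ∘ₗ inv = LinearMap.id)
    (hinv₂ : inv ∘ₗ canMap act = LinearMap.id)
    :
    (∀ a b : C, counit (R := F) (cotr inv (a ⊗ₜ[F] b)) = counit (R := F) a * counit (R := F) b) ∧
    (∀ (a : C) (ιa : Type v) (ra : Coalgebra.Repr F a ιa),
      ∑ i ∈ ra.index, cotr inv (ra.left i ⊗ₜ[F] ra.right i) = counit (R := F) a • (1 : H)) ∧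
    (∀ (a b : C) (h : H), cotr inv (a ⊗ₜ[F] act b h) = cotr inv (a ⊗ₜ[F] b) * h) ∧
    (∀ (a b : C) (ιa : Type v) (ra : Coalgebra.Repr F a ιa),
      ∑ i ∈ ra.index, act (ra.left i) (cotr inv (ra.right i ⊗ₜ[F] b))
        = counit (R := F) a • b) := by
  have hsurj : Function.Surjective (canMap act) := fun x => ⟨inv x, LinearMap.congr_fun hinv₁ x⟩
  exact ⟨counit_cotr hsurj hinv₂ hact_counit, fun a _ => sum_cotr_comul hinv₂ hact_one a,
    cotr_tmul_act hsurj hinv₂ hact_mul, fun a b _ => sum_act_cotr hsurj hinv₂ a b⟩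

/-- Basic properties of the cotranslation map `τ` of a right Hopf-Galois co-object:
`ε(τ(a⊗b)) = ε(a)ε(b)`, `Σ τ(a₁⊗a₂) = ε(a)1`, `τ(a ⊗ b·h) = τ(a⊗b)h` and
`Σ a₁·τ(a₂⊗b) = ε(a)b`. -/
theorem cotr_props {F : Type u} {C : Type v} {H : Type w} [Field F]
    [AddCommGroup C] [Module F C] [Coalgebra F C] [Ring H] [HopfAlgebra F H]
    (act : C →ₗ[F] H →ₗ[F] C)
    (hact_one : ∀ c : C, act c 1 = c)
    (hact_mul : ∀ (c : C) (h k : H), act (act c h) k = act c (h * k))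
    (hact_comul : ∀ (c : C) (h : H) (ιc : Type v) (rc : Coalgebra.Repr F c ιc)
      (ιh : Type w) (rh : Coalgebra.Repr F h ιh),
      comul (R := F) (act c h) = ∑ i ∈ rc.index, ∑ j ∈ rh.index,
        act (rc.left i) (rh.left j) ⊗ₜ[F] act (rc.right i) (rh.right j))
    (hact_counit : ∀ (c : C) (h : H),
      counit (R := F) (act c h) = counit (R := F) c * counit (R := F) h)
    (hker : LinearMap.ker (counit (R := F) : C →ₗ[F] F) =
      Submodule.span F {x : C | ∃ (c : C) (h : H), x = act c h - counit (R := F) h • c})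
    (inv : C ⊗[F] C →ₗ[F] C ⊗[F] H)
    (hinv₁ : canMap act ∘ₗ inv = LinearMap.id)
    (hinv₂ : inv ∘ₗ canMap act = LinearMap.id)
    :
    (∀ a b : C, counit (R := F) (cotr inv (a ⊗ₜ[F] b)) = counit (R := F) a * counit (R := F) b) ∧
    (∀ (a : C) (ιa : Type v) (ra : Coalgebra.Repr F a ιa),
      ∑ i ∈ ra.index, cotr inv (ra.left i ⊗ₜ[F] ra.right i) = counit (R := F) a • (1 : H)) ∧
    (∀ (a b : C) (h : H), cotr inv (a ⊗ₜ[F] act b h) = cotr inv (a ⊗ₜ[F] b) * h) ∧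
    (∀ (a b : C) (ιa : Type v) (ra : Coalgebra.Repr F a ιa),
      ∑ i ∈ ra.index, act (ra.left i) (cotr inv (ra.right i ⊗ₜ[F] b))
        = counit (R := F) a • b) :=
  cotr_props_general act hact_one hact_mul hact_counit inv hinv₁ hinv₂
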